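/- arXiv:1901.07875 — 6 statements merged into one kernel-verified Lean document; each statement's English description precedes it below -/
import Mathlib

section
/- Let (X, A, μ) be a finite measure space and (E_n) a sequence of measurable sets with ∑ μ(E_n) = ∞. Then μ(limsup E_n) ≥ limsup_{Q→∞} (∑_{n=1}^{Q} μ(E_n))² / (∑_{n,m=1}^{Q} μ(E_n ∩ E_m)). -/
open MeasureTheory Filter Set Topology
open scoped ENNReal NNReal

private lemma cs_lemma {X : Type*} [MeasurableSpace X] (μ : Measure X)
    (E : ℕ → Set X) (hE : ∀ n, MeasurableSet (E n)) (s : Finset ℕ) :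
    (∑ n ∈ s, μ (E n)) ^ 2 ≤
      μ (⋃ n ∈ s, E n) * ∑ n ∈ s, ∑ m ∈ s, μ (E n ∩ E m) := by
  set f : X → ℝ≥0∞ := fun x => ∑ n ∈ s, (E n).indicator 1 x with hf_def
  have hf : Measurable f := Finset.measurable_sum _ fun n _ =>
    measurable_one.indicator (hE n)
  set U : Set X := ⋃ n ∈ s, E n with hU_def
  have hU : MeasurableSet U := MeasurableSet.biUnion s.countable_toSet (fun n _ => hE n)
  set g : X → ℝ≥0∞ := U.indicator 1 with hg_def
  have hg : Measurable g := measurable_one.indicator hU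
  have hfg : f * g = f := by
    funext x
    by_cases hx : x ∈ U
    · simp [hg_def, Set.indicator_of_mem hx]
    · have hfx : f x = 0 := by
        refine Finset.sum_eq_zero fun n hn => ?_
        have hxn : x ∉ E n := fun h => hx (Set.mem_biUnion hn h)
        simp [Set.indicator_of_notMem hxn]
      simp [hfx]
  have hint_f : ∫⁻ x, f x ∂μ = ∑ n ∈ s, μ (E n) := by
    rw [hf_def, lintegral_finset_sum _ fun n _ => measurable_one.indicator (hE n)]
    exact Finset.sum_congr rfl fun n _ => lintegral_indicator_one (hE n)
  have hint_f2 : ∫⁻ x, f x ^ (2:ℝ) ∂μ = ∑ n ∈ s, ∑ m ∈ s, μ (E n ∩ E m) := by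
    have hpt : ∀ x, f x ^ (2:ℝ) = ∑ n ∈ s, ∑ m ∈ s, (E n ∩ E m).indicator (1 : X → ℝ≥0∞) x := by
      intro x
      rw [ENNReal.rpow_two, sq, hf_def]
      rw [Finset.sum_mul_sum]
      refine Finset.sum_congr rfl fun n _ => Finset.sum_congr rfl fun m _ => ?_
      rw [Set.inter_indicator_one]
      rfl
    simp_rw [hpt]
    rw [lintegral_finset_sum _ fun n _ => Finset.measurable_sum _ fun m _ =>
      measurable_one.indicator ((hE n).inter (hE m))]
    refine Finset.sum_congr rfl fun n _ => ?_
    rw [lintegral_finset_sum _ fun m _ => measurable_one.indicator ((hE n).inter (hE m))]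
    exact Finset.sum_congr rfl fun m _ => lintegral_indicator_one ((hE n).inter (hE m))
  have hint_g2 : ∫⁻ x, g x ^ (2:ℝ) ∂μ = μ U := by
    have hpt : ∀ x, g x ^ (2:ℝ) = U.indicator 1 x := by
      intro x
      by_cases hx : x ∈ U <;>
        simp [hg_def, Set.indicator_of_mem, Set.indicator_of_notMem, hx, ENNReal.rpow_two]
    simp_rw [hpt]
    exact lintegral_indicator_one hU
  have hconj : Real.HolderConjugate 2 2 := Real.HolderConjugate.two_two
  have hCS := ENNReal.lintegral_mul_le_Lp_mul_Lq μ hconj hf.aemeasurable hg.aemeasurable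
  rw [hfg, hint_f, hint_f2, hint_g2] at hCS
  have key : ∀ x : ℝ≥0∞, (x ^ (1/(2:ℝ))) ^ 2 = x := by
    intro x
    have := ENNReal.rpow_inv_natCast_pow (n := 2) two_ne_zero x
    norm_num at this ⊢
    exact this
  calc (∑ n ∈ s, μ (E n)) ^ 2
      ≤ ((∑ n ∈ s, ∑ m ∈ s, μ (E n ∩ E m)) ^ (1/(2:ℝ)) * μ U ^ (1/(2:ℝ))) ^ 2 := by
        rw [sq, sq]; exact mul_le_mul' hCS hCS
    _ = μ U * ∑ n ∈ s, ∑ m ∈ s, μ (E n ∩ E m) := by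
        rw [mul_pow, key, key, mul_comm]

private lemma tail_bound {X : Type*} [MeasurableSpace X] (μ : Measure X)
    (E : ℕ → Set X) (hE : ∀ n, MeasurableSet (E n)) (a Q : ℕ) :
    (∑ n ∈ Finset.Ico a Q, μ (E n)) ^ 2 /
      (∑ n ∈ Finset.Ico a Q, ∑ m ∈ Finset.Ico a Q, μ (E n ∩ E m)) ≤
      μ (⋃ i, ⋃ (_ : a ≤ i), E i) := by
  refine ENNReal.div_le_of_le_mul ?_
  refine le_trans (cs_lemma μ E hE (Finset.Ico a Q)) ?_
  refine mul_le_mul_left (measure_mono ?_) _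
  intro x hx
  simp only [Set.mem_iUnion, Finset.mem_coe, Finset.mem_Ico] at hx ⊢
  obtain ⟨n, ⟨ha, _⟩, hxn⟩ := hx
  exact ⟨n, ha, hxn⟩

/-- Kochen–Stone generalized Borel–Cantelli lemma. -/
theorem kochen_stone {X : Type*} [MeasurableSpace X] (μ : Measure X) [IsFiniteMeasure μ]
    (E : ℕ → Set X) (hE : ∀ n, MeasurableSet (E n))
    (hdiv : ∑' n, μ (E n) = ⊤) :
    Filter.limsup
      (fun Q => (∑ n ∈ Finset.range Q, μ (E n)) ^ 2 /
        ∑ n ∈ Finset.range Q, ∑ m ∈ Finset.range Q, μ (E n ∩ E m)) Filter.atTop ≤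
      μ (Filter.limsup E Filter.atTop) := by
  set R : ℕ → ℝ≥0∞ := fun Q => (∑ n ∈ Finset.range Q, μ (E n)) ^ 2 /
    ∑ n ∈ Finset.range Q, ∑ m ∈ Finset.range Q, μ (E n ∩ E m) with hR_def
  set S : ℕ → Set X := fun a => ⋃ i, ⋃ (_ : a ≤ i), E i with hS_def
  have hS_anti : ∀ a b : ℕ, a ≤ b → S b ⊆ S a := by
    intro a b hab x hx
    simp only [hS_def, Set.mem_iUnion] at hx ⊢
    obtain ⟨i, hi, h⟩ := hx
    exact ⟨i, hab.trans hi, h⟩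
  have hmeas : μ (Filter.limsup E Filter.atTop) = ⨅ a, μ (S a) := by
    have hls : Filter.limsup E Filter.atTop = ⋂ a, S a := by
      rw [limsup_eq_iInf_iSup_of_nat]
      simp only [hS_def, Set.iInf_eq_iInter, Set.iSup_eq_iUnion, ge_iff_le]
    rw [hls]
    refine Directed.measure_iInter
      (fun a => (MeasurableSet.biUnion (Set.to_countable _) fun i _ => hE i).nullMeasurableSet)
      (fun a b => ⟨max a b, hS_anti a _ (le_max_left a b), hS_anti b _ (le_max_right a b)⟩)
      ⟨0, measure_ne_top μ _⟩
  rw [hmeas]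
  refine le_iInf fun a => ?_
  -- the tail partial sums
  set T : ℕ → ℝ≥0∞ := fun Q => ∑ n ∈ Finset.Ico a Q, μ (E n) with hT_def
  set H : ℝ≥0∞ := ∑ n ∈ Finset.range a, μ (E n) with hH_def
  have hH_ne : H ≠ ⊤ := by
    exact ENNReal.sum_ne_top.mpr fun n _ => measure_ne_top μ _
  have hsplit : ∀ Q, a ≤ Q → ∑ n ∈ Finset.range Q, μ (E n) = H + T Q := by
    intro Q hQa
    rw [hH_def, hT_def, Finset.range_eq_Ico, Finset.range_eq_Ico]
    exact (Finset.sum_Ico_consecutive (fun n => μ (E n)) (Nat.zero_le a) hQa).symm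
  have htot : Tendsto (fun Q => ∑ n ∈ Finset.range Q, μ (E n)) atTop (𝓝 ⊤) := by
    rw [← hdiv]
    exact ENNReal.tendsto_nat_tsum _
  refine ENNReal.le_of_forall_lt_one_mul_le fun c hc => ?_
  have hc_ne : c ≠ ⊤ := (hc.trans_le le_top).ne
  rw [← ENNReal.limsup_const_mul_of_ne_top hc_ne]
  refine limsup_le_of_le (by isBoundedDefault) ?_
  -- square root of c
  set s : ℝ≥0 := NNReal.sqrt c.toNNReal with hs_def
  have hs2 : ((s : ℝ≥0∞)) ^ 2 = c := by
    rw [← ENNReal.coe_pow, hs_def, NNReal.sq_sqrt, ENNReal.coe_toNNReal hc_ne]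
  have hs1 : (s : ℝ≥0∞) < 1 := by
    have h1 : (c.toNNReal : ℝ≥0∞) < 1 := by rwa [ENNReal.coe_toNNReal hc_ne]
    have h2 : c.toNNReal < 1 := ENNReal.coe_lt_one_iff.mp h1
    rw [← ENNReal.coe_one, ENNReal.coe_lt_coe, hs_def, ← NNReal.sqrt_one, NNReal.sqrt_lt_sqrt]
    exact h2
  have hden_ne : (1 : ℝ≥0∞) - s ≠ 0 := by
    rw [ne_eq, tsub_eq_zero_iff_le]
    exact fun h => absurd hs1 (not_lt.mpr h)
  have hden_netop : (1 : ℝ≥0∞) - s ≠ ⊤ := by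
    exact (tsub_le_self.trans_lt (lt_top_iff_ne_top.mpr ENNReal.one_ne_top)).ne
  set M : ℝ≥0∞ := (s : ℝ≥0∞) * H / (1 - s) with hM_def
  have hM_lt : M < ⊤ := ENNReal.div_lt_top
    (ENNReal.mul_ne_top ENNReal.coe_ne_top hH_ne) hden_ne
  have hHM : H + M < ⊤ := ENNReal.add_lt_top.mpr ⟨hH_ne.lt_top, hM_lt⟩
  have hev1 : ∀ᶠ Q in atTop, H + M < ∑ n ∈ Finset.range Q, μ (E n) :=
    htot.eventually (lt_mem_nhds hHM)
  filter_upwards [hev1, eventually_ge_atTop a] with Q hQM' hQa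
  have hQM : M < T Q := by
    rw [hsplit Q hQa] at hQM'
    exact (ENNReal.add_lt_add_iff_left hH_ne).mp hQM'
  have hsplitQ := hsplit Q hQa
  have hT_ne : T Q ≠ ⊤ := ENNReal.sum_ne_top.mpr fun n _ => measure_ne_top μ _
  have key1 : (s : ℝ≥0∞) * (H + T Q) ≤ T Q := by
    have h1 : (s : ℝ≥0∞) * H ≤ (1 - s) * T Q := by
      have heq : (1 - (s:ℝ≥0∞)) * M = (s : ℝ≥0∞) * H :=
        ENNReal.mul_div_cancel hden_ne hden_netop
      calc (s : ℝ≥0∞) * H = (1 - s) * M := heq.symm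
        _ ≤ (1 - s) * T Q := mul_le_mul_right hQM.le _
    calc (s : ℝ≥0∞) * (H + T Q) = s * H + s * T Q := mul_add _ _ _
      _ ≤ (1 - s) * T Q + s * T Q := add_le_add_left h1 _
      _ = ((1 - s) + s) * T Q := (add_mul _ _ _).symm
      _ = T Q := by rw [tsub_add_cancel_of_le hs1.le, one_mul]
  have key2 : c * (∑ n ∈ Finset.range Q, μ (E n)) ^ 2 ≤ T Q ^ 2 := by
    rw [hsplitQ, ← hs2, ← mul_pow]
    rw [sq, sq]
    exact mul_le_mul' key1 key1
  have hDsub : ∑ n ∈ Finset.Ico a Q, ∑ m ∈ Finset.Ico a Q, μ (E n ∩ E m) ≤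
      ∑ n ∈ Finset.range Q, ∑ m ∈ Finset.range Q, μ (E n ∩ E m) := by
    have hsub : Finset.Ico a Q ⊆ Finset.range Q := by
      rw [Finset.range_eq_Ico]
      exact Finset.Ico_subset_Ico (Nat.zero_le a) le_rfl
    calc ∑ n ∈ Finset.Ico a Q, ∑ m ∈ Finset.Ico a Q, μ (E n ∩ E m)
        ≤ ∑ n ∈ Finset.Ico a Q, ∑ m ∈ Finset.range Q, μ (E n ∩ E m) :=
          Finset.sum_le_sum fun n _ => Finset.sum_le_sum_of_subset hsub
      _ ≤ ∑ n ∈ Finset.range Q, ∑ m ∈ Finset.range Q, μ (E n ∩ E m) :=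
          Finset.sum_le_sum_of_subset hsub
  calc c * R Q = c * (∑ n ∈ Finset.range Q, μ (E n)) ^ 2 /
        ∑ n ∈ Finset.range Q, ∑ m ∈ Finset.range Q, μ (E n ∩ E m) := by
        rw [hR_def, mul_div_assoc]
    _ ≤ T Q ^ 2 / ∑ n ∈ Finset.Ico a Q, ∑ m ∈ Finset.Ico a Q, μ (E n ∩ E m) :=
        ENNReal.div_le_div key2 hDsub
    _ ≤ μ (S a) := tail_bound μ E hE a Q
end

section
/- For t ∈ [0,1], the iterated function system Φ_t = {x/2, (x+1)/2, (x+t)/2, (x+1+t)/2} contains an exact overlap if and only if t is rational. (An IFS contains an exact overlap if there exist two distinct finite words a, b over the alphabet {1,2,3,4} such that the corresponding compositions of maps are equal as functions.) -/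
/-- The four maps of the IFS `Φ_t`. -/
noncomputable def phiMap (t : ℝ) : Fin 4 → ℝ → ℝ :=
  ![fun x => x / 2, fun x => (x + 1) / 2, fun x => (x + t) / 2, fun x => (x + 1 + t) / 2]

/-- Composition of the IFS maps along a word, `φ_a = φ_{a_1} ∘ ⋯ ∘ φ_{a_n}`. -/
noncomputable def phiWord (t : ℝ) (a : List (Fin 4)) : ℝ → ℝ :=
  a.foldr (fun i f => phiMap t i ∘ f) id

/-- ε-digits of the letters. -/
def eD : Fin 4 → ℕ := ![0, 1, 0, 1]

/-- δ-digits of the letters. -/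
def dD : Fin 4 → ℕ := ![0, 0, 1, 1]

/-- Binary value of a digit sequence obtained from a word. -/
def natVal (f : Fin 4 → ℕ) : List (Fin 4) → ℕ
  | [] => 0
  | i :: l => f i * 2 ^ l.length + natVal f l

lemma phiWord_nil (t : ℝ) : phiWord t [] = id := rfl

lemma phiWord_cons (t : ℝ) (i : Fin 4) (l : List (Fin 4)) (x : ℝ) :
    phiWord t (i :: l) x = (phiWord t l x + ((eD i : ℝ) + (dD i : ℝ) * t)) / 2 := by
  show phiMap t i (phiWord t l x) = _
  fin_cases i <;> simp [phiMap, eD, dD] <;> ring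

lemma phiWord_eval (t : ℝ) (a : List (Fin 4)) (x : ℝ) :
    phiWord t a x = (x + (natVal eD a : ℝ) + (natVal dD a : ℝ) * t) / 2 ^ a.length := by
  induction a with
  | nil => simp [phiWord_nil, natVal]
  | cons i l ih =>
      rw [phiWord_cons, ih]
      simp only [natVal, List.length_cons]
      push_cast
      have h : (2:ℝ) ^ l.length ≠ 0 := by positivity
      field_simp
      ring

lemma natVal_lt (f : Fin 4 → ℕ) (hf : ∀ i, f i ≤ 1) (a : List (Fin 4)) :
    natVal f a < 2 ^ a.length := by
  induction a with
  | nil => simp [natVal]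
  | cons i l ih =>
      have := hf i
      simp only [natVal, List.length_cons, pow_succ]
      nlinarith [ih]

lemma word_inj (a b : List (Fin 4)) (hlen : a.length = b.length)
    (hE : natVal eD a = natVal eD b) (hD : natVal dD a = natVal dD b) : a = b := by
  induction a generalizing b with
  | nil => cases b with
    | nil => rfl
    | cons j m => simp at hlen
  | cons i l ih =>
      cases b with
      | nil => simp at hlen
      | cons j m =>
          simp only [List.length_cons, Nat.succ.injEq] at hlen
          simp only [natVal, hlen] at hE hD
          have hEl := natVal_lt eD (by decide) l
          have hEm := natVal_lt eD (by decide) m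
          have hDl := natVal_lt dD (by decide) l
          have hDm := natVal_lt dD (by decide) m
          rw [hlen] at hEl hDl
          have hei : eD i ≤ 1 := by fin_cases i <;> decide
          have hej : eD j ≤ 1 := by fin_cases j <;> decide
          have hdi : dD i ≤ 1 := by fin_cases i <;> decide
          have hdj : dD j ≤ 1 := by fin_cases j <;> decide
          have hP : (0:ℕ) < 2 ^ m.length := Nat.pow_pos (by norm_num)
          have he : eD i = eD j ∧ natVal eD l = natVal eD m := by
            rcases Nat.le_one_iff_eq_zero_or_eq_one.mp hei with h1 | h1 <;>
            rcases Nat.le_one_iff_eq_zero_or_eq_one.mp hej with h2 | h2 <;>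
            rw [h1, h2] at hE ⊢ <;> omega
          have hd : dD i = dD j ∧ natVal dD l = natVal dD m := by
            rcases Nat.le_one_iff_eq_zero_or_eq_one.mp hdi with h1 | h1 <;>
            rcases Nat.le_one_iff_eq_zero_or_eq_one.mp hdj with h2 | h2 <;>
            rw [h1, h2] at hD ⊢ <;> omega
          have hij : i = j := by
            have h1 := he.1
            have h2 := hd.1
            fin_cases i <;> fin_cases j <;> simp_all [eD, dD]
          rw [hij, ih m hlen he.2 hd.2]

lemma phiWord_eq_iff (t : ℝ) (a b : List (Fin 4)) :
    phiWord t a = phiWord t b ↔ (a.length = b.length ∧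
      (natVal eD a : ℝ) + (natVal dD a : ℝ) * t = (natVal eD b : ℝ) + (natVal dD b : ℝ) * t) := by
  constructor
  · intro h
    have h0 := congrFun h 0
    have h1 := congrFun h 1
    rw [phiWord_eval, phiWord_eval] at h0 h1
    have hpa : (2:ℝ) ^ a.length ≠ 0 := by positivity
    have hpb : (2:ℝ) ^ b.length ≠ 0 := by positivity
    have hlen : a.length = b.length := by
      have : (2:ℝ) ^ a.length = 2 ^ b.length := by
        field_simp at h0 h1
        nlinarith [h0, h1]
      exact Nat.pow_right_injective (le_refl 2) (by exact_mod_cast this)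
    refine ⟨hlen, ?_⟩
    rw [hlen] at h0
    field_simp at h0
    linarith
  · rintro ⟨hlen, hval⟩
    funext x
    rw [phiWord_eval, phiWord_eval, hlen]
    congr 1
    linarith

/-- A word of length `n` whose `c`-channel digits are the bits of `m`. -/
def bitWord (c : Fin 4) : ℕ → ℕ → List (Fin 4)
  | 0, _ => []
  | n + 1, m => (if m.testBit n then c else 0) :: bitWord c n m

lemma bitWord_length (c : Fin 4) (n m : ℕ) : (bitWord c n m).length = n := by
  induction n with
  | zero => rfl
  | succ n ih => simp [bitWord, ih]

lemma mod_pow_succ (m n : ℕ) :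
    m % 2 ^ (n + 1) = (if m.testBit n then 2 ^ n else 0) + m % 2 ^ n := by
  have h : m % (2 ^ n * 2) = m % 2 ^ n + 2 ^ n * (m / 2 ^ n % 2) := Nat.mod_mul
  rw [pow_succ, h, Nat.testBit_eq_decide_div_mod_eq]
  rcases Nat.mod_two_eq_zero_or_one (m / 2 ^ n) with h2 | h2 <;> simp [h2] <;> omega

lemma natVal_bitWord (f : Fin 4 → ℕ) (hf0 : f 0 = 0) (c : Fin 4) (n m : ℕ) :
    natVal f (bitWord c n m) = f c * (m % 2 ^ n) := by
  induction n with
  | zero => simp [bitWord, natVal, Nat.mod_one]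
  | succ n ih =>
      simp only [bitWord, natVal, bitWord_length, ih, mod_pow_succ]
      by_cases h : m.testBit n <;> simp [h, hf0] <;> ring

/-- For `t ∈ [0,1]`, the IFS `Φ_t` contains an exact overlap iff `t` is rational. -/
theorem exact_overlap_iff_rational (t : ℝ) (ht : t ∈ Set.Icc (0:ℝ) 1) :
    (∃ a b : List (Fin 4), a ≠ b ∧ phiWord t a = phiWord t b) ↔ ∃ q : ℚ, (q : ℝ) = t := by
  constructor
  · rintro ⟨a, b, hab, h⟩
    rw [phiWord_eq_iff] at h
    obtain ⟨hlen, hval⟩ := h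
    by_cases hD : natVal dD a = natVal dD b
    · exfalso
      apply hab
      apply word_inj a b hlen _ hD
      rw [hD] at hval
      exact_mod_cast (by linarith : (natVal eD a : ℝ) = natVal eD b)
    · refine ⟨((natVal eD b : ℚ) - natVal eD a) / ((natVal dD a : ℚ) - natVal dD b), ?_⟩
      have hD' : (natVal dD a : ℝ) - natVal dD b ≠ 0 := by
        intro h
        apply hD
        exact_mod_cast (by linarith : (natVal dD a : ℝ) = natVal dD b)
      push_cast
      field_simp
      linarith
  · rintro ⟨q, hq⟩
    obtain ⟨ht0, ht1⟩ := ht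
    have hq0 : 0 ≤ q := by
      rw [← Rat.cast_le (K := ℝ)]
      push_cast
      linarith
    set u : ℕ := q.num.toNat with hu
    set v : ℕ := q.den with hv
    have hv0 : 0 < v := q.pos
    have hnum : (q.num : ℚ) = (u : ℚ) := by
      rw [hu]
      exact_mod_cast (Int.toNat_of_nonneg (Rat.num_nonneg.mpr hq0)).symm
    have hqt : (u : ℝ) = (v : ℝ) * t := by
      have h1 : q * (v : ℚ) = (u : ℚ) := by
        rw [hv, Rat.mul_den_eq_num, hnum]
      have h2 : (q : ℝ) * (v : ℝ) = (u : ℝ) := by exact_mod_cast congrArg (fun x : ℚ => (x : ℝ)) h1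
      rw [← hq, ← h2]
      ring
    set n := v with hn
    refine ⟨bitWord 2 n v, bitWord 1 n u, ?_, ?_⟩
    · intro h
      have := congrArg (natVal dD) h
      rw [natVal_bitWord dD rfl, natVal_bitWord dD rfl] at this
      simp [dD] at this
      rw [Nat.mod_eq_of_lt (Nat.lt_two_pow_self (n := v))] at this
      omega
    · rw [phiWord_eq_iff]
      have huv : u ≤ v := by
        have : (u : ℝ) ≤ (v : ℝ) := by
          rw [hqt]
          nlinarith [show (0:ℝ) < (v:ℝ) from by exact_mod_cast hv0]
        exact_mod_cast this
      have hulv : u < 2 ^ n := lt_of_le_of_lt huv (Nat.lt_two_pow_self (n := v))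
      constructor
      · rw [bitWord_length, bitWord_length]
      · rw [natVal_bitWord eD rfl, natVal_bitWord eD rfl,
            natVal_bitWord dD rfl, natVal_bitWord dD rfl,
            Nat.mod_eq_of_lt (Nat.lt_two_pow_self (n := v)), Nat.mod_eq_of_lt hulv]
        have h2 : eD 2 = 0 ∧ dD 2 = 1 ∧ eD 1 = 1 ∧ dD 1 = 0 := by decide
        rw [h2.1, h2.2.1, h2.2.2.1, h2.2.2.2]
        push_cast
        linarith [hqt]
end

section
/- Let t be an irrational number in (0,1) with continued fraction convergents p_m/q_m. Fix s > 0. If n satisfies 2s·q_m ≤ 2^n − 1 < q_m for some m, then for every z ∈ [0, 1+t] and all distinct words a, a' ∈ {1,2,3,4}^n (with n sufficiently large) one has |φ_a(z) − φ_{a'}(z)| > s/4^n. -/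
/-- The Gauss map. -/
noncomputable def gaussMap (x : ℝ) : ℝ := 1 / x - ⌊1 / x⌋

/-- `cfQuot t m = ζ_{m+1}`, the `(m+1)`-st partial quotient of `t`. -/
noncomputable def cfQuot (t : ℝ) (m : ℕ) : ℤ := ⌊1 / gaussMap^[m] t⌋

/-- `cfDen t m = q_m`, the denominator of the `m`-th continued fraction convergent of `t`:
`q_0 = 1`, `q_1 = ζ_1`, `q_{m+2} = ζ_{m+2} q_{m+1} + q_m`. -/
noncomputable def cfDen (t : ℝ) : ℕ → ℤ
  | 0 => 1
  | 1 => cfQuot t 0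
  | m + 2 => cfQuot t (m + 1) * cfDen t (m + 1) + cfDen t m

noncomputable def cfNum (t : ℝ) : ℕ → ℤ
  | 0 => 0
  | 1 => 1
  | m + 2 => cfQuot t (m + 1) * cfNum t (m + 1) + cfNum t m

noncomputable def tseq (t : ℝ) (m : ℕ) : ℝ := gaussMap^[m] t

lemma tseq_zero (t : ℝ) : tseq t 0 = t := rfl

lemma tseq_succ (t : ℝ) (m : ℕ) : tseq t (m+1) = gaussMap (tseq t m) := by
  simp [tseq, Function.iterate_succ_apply']

lemma gaussMap_eq_fract (x : ℝ) : gaussMap x = Int.fract (1/x) := rfl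

lemma tseq_prop (t : ℝ) (ht : Irrational t) (ht01 : t ∈ Set.Ioo (0:ℝ) 1) :
    ∀ m, Irrational (tseq t m) ∧ tseq t m ∈ Set.Ioo (0:ℝ) 1 := by
  intro m
  induction m with
  | zero => exact ⟨ht, ht01⟩
  | succ m ih =>
    obtain ⟨hirr, h0, h1⟩ := ih
    rw [tseq_succ, gaussMap_eq_fract]
    have hinv : Irrational (1 / tseq t m) := by
      rw [one_div]; exact hirr.inv
    have hfr : Irrational (Int.fract (1 / tseq t m)) := by
      unfold Int.fract
      exact hinv.sub_intCast _
    refine ⟨hfr, ?_, Int.fract_lt_one _⟩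
    rcases lt_or_eq_of_le (Int.fract_nonneg (1 / tseq t m)) with h | h
    · exact h
    · exact absurd (h ▸ hfr) (by simp [Irrational])

lemma cfQuot_eq (t : ℝ) (m : ℕ) : cfQuot t m = ⌊1 / tseq t m⌋ := rfl

lemma cfQuot_one_le (t : ℝ) (ht : Irrational t) (ht01 : t ∈ Set.Ioo (0:ℝ) 1) (m : ℕ) :
    1 ≤ cfQuot t m := by
  obtain ⟨_, h0, h1⟩ := tseq_prop t ht ht01 m
  rw [cfQuot_eq]
  rw [Int.le_floor]
  push_cast
  rw [le_div_iff₀ h0]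
  linarith

lemma one_div_tseq (t : ℝ) (ht : Irrational t) (ht01 : t ∈ Set.Ioo (0:ℝ) 1) (m : ℕ) :
    1 / tseq t m = cfQuot t m + tseq t (m+1) := by
  rw [tseq_succ, gaussMap_eq_fract, cfQuot_eq]
  unfold Int.fract
  ring

lemma tseq_mul (t : ℝ) (ht : Irrational t) (ht01 : t ∈ Set.Ioo (0:ℝ) 1) (m : ℕ) :
    tseq t m * (cfQuot t m + tseq t (m+1)) = 1 := by
  have h0 := (tseq_prop t ht ht01 m).2.1
  rw [← one_div_tseq t ht ht01 m]
  field_simp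

lemma cfDen_prop (t : ℝ) (ht : Irrational t) (ht01 : t ∈ Set.Ioo (0:ℝ) 1) :
    ∀ m, 1 ≤ cfDen t m ∧ cfDen t m ≤ cfDen t (m+1) := by
  intro m
  induction m with
  | zero =>
    refine ⟨le_refl _, ?_⟩
    show (1:ℤ) ≤ cfQuot t 0
    exact cfQuot_one_le t ht ht01 0
  | succ m ih =>
    obtain ⟨h1, h2⟩ := ih
    have hq := cfQuot_one_le t ht ht01 (m+1)
    constructor
    · omega
    · show cfDen t (m+1) ≤ cfQuot t (m+1) * cfDen t (m+1) + cfDen t m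
      nlinarith

lemma cfDet (t : ℝ) : ∀ m : ℕ,
    cfDen t (m+1) * cfNum t m - cfDen t m * cfNum t (m+1) = (-1)^(m+1) := by
  intro m
  induction m with
  | zero => simp [cfDen, cfNum]
  | succ m ih =>
    show (cfQuot t (m+1) * cfDen t (m+1) + cfDen t m) * cfNum t (m+1)
        - cfDen t (m+1) * (cfQuot t (m+1) * cfNum t (m+1) + cfNum t m) = (-1)^(m+2)
    have : (-1:ℤ)^(m+2) = -(-1)^(m+1) := by ring
    rw [this, ← ih]; ring

noncomputable def theta (t : ℝ) (m : ℕ) : ℝ := (cfDen t m : ℝ) * t - (cfNum t m : ℝ)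

noncomputable def Tprod (t : ℝ) (m : ℕ) : ℝ := ∏ i ∈ Finset.range (m+1), tseq t i

lemma Tprod_pos (t : ℝ) (ht : Irrational t) (ht01 : t ∈ Set.Ioo (0:ℝ) 1) (m : ℕ) :
    0 < Tprod t m :=
  Finset.prod_pos fun i _ => (tseq_prop t ht ht01 i).2.1

lemma Tprod_succ (t : ℝ) (m : ℕ) : Tprod t (m+1) = Tprod t m * tseq t (m+1) :=
  Finset.prod_range_succ _ _

lemma theta_eq (t : ℝ) (ht : Irrational t) (ht01 : t ∈ Set.Ioo (0:ℝ) 1) :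
    ∀ m, theta t m = (-1)^m * Tprod t m ∧ theta t (m+1) = (-1)^(m+1) * Tprod t (m+1) := by
  have ht0 : t ≠ 0 := ne_of_gt ht01.1
  intro m
  induction m with
  | zero =>
    constructor
    · simp [theta, cfDen, cfNum, Tprod, tseq_zero]
    · have hm := tseq_mul t ht ht01 0
      rw [tseq_zero] at hm
      show (cfDen t 1 : ℝ) * t - (cfNum t 1 : ℝ) = (-1)^1 * Tprod t 1
      have hd : cfDen t 1 = cfQuot t 0 := rfl
      have hn : cfNum t 1 = 1 := rfl
      rw [hd, hn, Tprod_succ]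
      push_cast
      simp only [Tprod, Finset.prod_range_succ, Finset.prod_range_zero, one_mul, tseq_zero]
      linear_combination hm
  | succ m ih =>
    obtain ⟨h1, h2⟩ := ih
    refine ⟨h2, ?_⟩
    have hrecD : (cfDen t (m+2) : ℝ) = (cfQuot t (m+1) : ℝ) * cfDen t (m+1) + cfDen t m := by
      show ((cfQuot t (m+1) * cfDen t (m+1) + cfDen t m : ℤ) : ℝ) = _
      push_cast; ring
    have hrecN : (cfNum t (m+2) : ℝ) = (cfQuot t (m+1) : ℝ) * cfNum t (m+1) + cfNum t m := by
      show ((cfQuot t (m+1) * cfNum t (m+1) + cfNum t m : ℤ) : ℝ) = _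
      push_cast; ring
    have hth : theta t (m+2) = (cfQuot t (m+1) : ℝ) * theta t (m+1) + theta t m := by
      unfold theta; rw [hrecD, hrecN]; ring
    rw [hth, h1, h2, Tprod_succ t (m+1), Tprod_succ t m]
    have hm := tseq_mul t ht ht01 (m+1)
    have hpow : (-1:ℝ)^(m+2) = (-1)^m := by ring
    have hpow1 : (-1:ℝ)^(m+1) = -(-1)^m := by ring
    rw [hpow, hpow1]
    linear_combination (-(-1:ℝ)^m * Tprod t m) * hm

lemma Tprod_eq (t : ℝ) (ht : Irrational t) (ht01 : t ∈ Set.Ioo (0:ℝ) 1) :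
    ∀ m, Tprod t m = 1 / ((cfDen t (m+1) : ℝ) + (cfDen t m : ℝ) * tseq t (m+1)) := by
  intro m
  have hden : ∀ k, (0:ℝ) < (cfDen t (k+1) : ℝ) + (cfDen t k : ℝ) * tseq t (k+1) := by
    intro k
    have h1 := (cfDen_prop t ht ht01 k).1
    have h2 := (cfDen_prop t ht ht01 (k+1)).1
    have h3 := (tseq_prop t ht ht01 (k+1)).2.1
    have : (1:ℝ) ≤ (cfDen t (k+1) : ℝ) := by exact_mod_cast h2
    have : (1:ℝ) ≤ (cfDen t k : ℝ) := by exact_mod_cast h1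
    nlinarith
  induction m with
  | zero =>
    have hm := tseq_mul t ht ht01 0
    rw [tseq_zero] at hm
    have hd0 : cfDen t 0 = 1 := rfl
    have hd1 : cfDen t 1 = cfQuot t 0 := rfl
    simp only [Tprod, Finset.prod_range_succ, Finset.prod_range_zero, one_mul, tseq_zero, hd1, hd0]
    rw [eq_div_iff (by have := hden 0; rw [hd1, hd0] at this; push_cast at this ⊢; linarith)]
    push_cast
    linear_combination hm
  | succ m ih =>
    rw [Tprod_succ, ih]
    have hd := hden m
    have hd' := hden (m+1)
    rw [div_mul_eq_mul_div, one_mul, div_eq_div_iff hd.ne' hd'.ne']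
    have hrecD : (cfDen t (m+2) : ℝ) = (cfQuot t (m+1) : ℝ) * cfDen t (m+1) + cfDen t m := by
      show ((cfQuot t (m+1) * cfDen t (m+1) + cfDen t m : ℤ) : ℝ) = _
      push_cast; ring
    rw [hrecD]
    have hm2 := tseq_mul t ht ht01 (m+1)
    linear_combination (cfDen t (m+1) : ℝ) * hm2

lemma abs_theta (t : ℝ) (ht : Irrational t) (ht01 : t ∈ Set.Ioo (0:ℝ) 1) (m : ℕ) :
    |theta t m| = Tprod t m := by
  rw [(theta_eq t ht ht01 m).1, abs_mul, abs_pow, abs_neg, abs_one, one_pow, one_mul,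
    abs_of_pos (Tprod_pos t ht ht01 m)]

lemma theta_mul_neg (t : ℝ) (ht : Irrational t) (ht01 : t ∈ Set.Ioo (0:ℝ) 1) (m : ℕ) :
    theta t m * theta t (m+1) < 0 := by
  rw [(theta_eq t ht ht01 m).1, (theta_eq t ht ht01 m).2]
  have hodd : ((-1:ℝ))^m * (-1)^(m+1) = -1 := by
    rw [← pow_add]
    exact Odd.neg_one_pow ⟨m, by ring⟩
  have h1 := Tprod_pos t ht ht01 m
  have h2 := Tprod_pos t ht ht01 (m+1)
  nlinarith [hodd, mul_pos h1 h2]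

lemma theta_lb (t : ℝ) (ht : Irrational t) (ht01 : t ∈ Set.Ioo (0:ℝ) 1) (m : ℕ) :
    1 / (2 * (cfDen t (m+1) : ℝ)) ≤ |theta t m| := by
  rw [abs_theta t ht ht01 m, Tprod_eq t ht ht01 m]
  have hq1 : (1:ℝ) ≤ (cfDen t m : ℝ) := by exact_mod_cast (cfDen_prop t ht ht01 m).1
  have hq2 : (cfDen t m : ℝ) ≤ (cfDen t (m+1) : ℝ) := by
    exact_mod_cast (cfDen_prop t ht ht01 m).2
  obtain ⟨_, ht0, ht1⟩ := tseq_prop t ht ht01 (m+1)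
  apply one_div_le_one_div_of_le
  · nlinarith
  · nlinarith

lemma dio (t : ℝ) (ht : Irrational t) (ht01 : t ∈ Set.Ioo (0:ℝ) 1) (m : ℕ)
    (P Q : ℤ) (hQ0 : 0 < Q) (hQm : Q < cfDen t (m+1)) :
    1 / (2 * (cfDen t (m+1) : ℝ)) ≤ |(Q:ℝ) * t - (P:ℝ)| := by
  have hqmpos : (0:ℤ) < cfDen t m := (cfDen_prop t ht ht01 m).1
  have hqm1pos : (0:ℤ) < cfDen t (m+1) := (cfDen_prop t ht ht01 (m+1)).1
  set qm := cfDen t m with hqmdef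
  set qm1 := cfDen t (m+1) with hqm1def
  set pm := cfNum t m with hpmdef
  set pm1 := cfNum t (m+1) with hpm1def
  have hdet : qm1 * pm - qm * pm1 = (-1)^(m+1) := cfDet t m
  obtain ⟨ε, hεdef⟩ : ∃ e : ℤ, e = qm1 * pm - qm * pm1 := ⟨_, rfl⟩
  have hε2 : ε * ε = 1 := by
    rw [hεdef, hdet, ← pow_add]
    exact Even.neg_one_pow ⟨m+1, by ring⟩
  obtain ⟨x, hxdef⟩ : ∃ e : ℤ, e = ε * (P * qm1 - Q * pm1) := ⟨_, rfl⟩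
  obtain ⟨y, hydef⟩ : ∃ e : ℤ, e = ε * (Q * pm - P * qm) := ⟨_, rfl⟩
  have hx : x * qm + y * qm1 = Q := by
    rw [hxdef, hydef]
    linear_combination Q * hε2 - ε * Q * hεdef
  have hy : x * pm + y * pm1 = P := by
    rw [hxdef, hydef]
    linear_combination P * hε2 - ε * P * hεdef
  have hxne : x ≠ 0 := by
    intro h0
    rw [h0, zero_mul, zero_add] at hx
    rcases le_or_gt y 0 with hy0 | hy0
    · nlinarith
    · have : 1 ≤ y := hy0
      nlinarith
  have hxR : (x:ℝ) * (qm:ℝ) + (y:ℝ) * (qm1:ℝ) = (Q:ℝ) := by exact_mod_cast hx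
  have hyR : (x:ℝ) * (pm:ℝ) + (y:ℝ) * (pm1:ℝ) = (P:ℝ) := by exact_mod_cast hy
  have hsplit : (Q:ℝ) * t - (P:ℝ) = (x:ℝ) * theta t m + (y:ℝ) * theta t (m+1) := by
    unfold theta
    rw [← hqmdef, ← hqm1def, ← hpmdef, ← hpm1def]
    linear_combination hyR - t * hxR
  -- key : same-sign absolute value bound
  have key : ∀ A B : ℝ, 0 ≤ A * B → |A| ≤ |A + B| := by
    intro A B h
    rcases eq_or_ne A 0 with rfl | hA
    · simp
    rcases lt_or_gt_of_ne hA with hA | hA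
    · have hB : B ≤ 0 := by nlinarith
      rw [abs_of_neg hA, abs_of_neg (by linarith : A + B < 0)]
      linarith
    · have hB : 0 ≤ B := by nlinarith
      rw [abs_of_pos hA, abs_of_pos (by linarith : 0 < A + B)]
      linarith
  -- the product (xθm)(yθm1) is nonneg
  have hprod : 0 ≤ ((x:ℝ) * theta t m) * ((y:ℝ) * theta t (m+1)) := by
    rcases eq_or_ne y 0 with rfl | hyne
    · simp
    · have hxy : x * y < 0 := by
        rcases lt_or_gt_of_ne hyne with hyneg | hypos
        · have hym1 : y ≤ -1 := by omega
          have hxq : x * qm = Q - y * qm1 := by linarith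
          have h2 : qm1 ≤ (-y) * qm1 := le_mul_of_one_le_left (le_of_lt hqm1pos) (by omega)
          have h3 : 0 < x * qm := by nlinarith
          have hxpos : 0 < x := by nlinarith
          exact mul_neg_of_pos_of_neg hxpos hyneg
        · have hy1 : 1 ≤ y := hypos
          have hxq : x * qm = Q - y * qm1 := by linarith
          have h2 : qm1 ≤ y * qm1 := le_mul_of_one_le_left (le_of_lt hqm1pos) hy1
          have h3 : x * qm < 0 := by nlinarith
          have hxneg : x < 0 := by nlinarith
          exact mul_neg_of_neg_of_pos hxneg hypos
      have hxyR : ((x:ℝ)) * (y:ℝ) < 0 := by exact_mod_cast hxy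
      have hθ := theta_mul_neg t ht ht01 m
      nlinarith
  have habs1 : |theta t m| ≤ |(x:ℝ) * theta t m| := by
    rw [abs_mul]
    have : (1:ℝ) ≤ |(x:ℝ)| := by
      rw [← Int.cast_abs]
      exact_mod_cast Int.one_le_abs (by omega)
    nlinarith [abs_nonneg (theta t m)]
  calc 1 / (2 * (qm1:ℝ)) ≤ |theta t m| := theta_lb t ht ht01 m
    _ ≤ |(x:ℝ) * theta t m| := habs1
    _ ≤ |(x:ℝ) * theta t m + (y:ℝ) * theta t (m+1)| := key _ _ hprod
    _ = |(Q:ℝ) * t - (P:ℝ)| := by rw [hsplit]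


def dE : Fin 4 → ℤ := ![0, 1, 0, 1]
def dF : Fin 4 → ℤ := ![0, 0, 1, 1]

def wSum (d : Fin 4 → ℤ) : List (Fin 4) → ℤ
  | [] => 0
  | i :: l => d i * 2 ^ l.length + wSum d l

lemma phiWord_cons_s4 (t : ℝ) (i : Fin 4) (l : List (Fin 4)) (z : ℝ) :
    phiWord t (i :: l) z = phiMap t i (phiWord t l z) := rfl

lemma phiMap_eq (t : ℝ) (i : Fin 4) (x : ℝ) :
    phiMap t i x = (x + (dE i : ℝ) + (dF i : ℝ) * t) / 2 := by
  fin_cases i <;> simp [phiMap, dE, dF] <;> ring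

lemma phiWord_eq (t : ℝ) : ∀ (l : List (Fin 4)) (z : ℝ),
    phiWord t l z = (z + (wSum dE l : ℝ) + (wSum dF l : ℝ) * t) / 2 ^ l.length := by
  intro l
  induction l with
  | nil => intro z; simp [phiWord, wSum]
  | cons i l ih =>
    intro z
    rw [phiWord_cons_s4, phiMap_eq, ih]
    have h2 : (0:ℝ) < 2 ^ l.length := by positivity
    have hw : wSum dE (i :: l) = dE i * 2 ^ l.length + wSum dE l := rfl
    have hw' : wSum dF (i :: l) = dF i * 2 ^ l.length + wSum dF l := rfl
    have hlen : (i :: l).length = l.length + 1 := rfl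
    rw [hw, hw', hlen]
    push_cast
    rw [pow_succ]
    field_simp
    ring

lemma wSum_bounds (d : Fin 4 → ℤ) (hd : ∀ i, 0 ≤ d i ∧ d i ≤ 1) :
    ∀ l : List (Fin 4), 0 ≤ wSum d l ∧ wSum d l ≤ 2 ^ l.length - 1 := by
  intro l
  induction l with
  | nil => simp [wSum]
  | cons i l ih =>
    obtain ⟨h1, h2⟩ := ih
    obtain ⟨hd1, hd2⟩ := hd i
    have hp : (1:ℤ) ≤ 2 ^ l.length := by exact_mod_cast Nat.one_le_two_pow
    have hw : wSum d (i :: l) = d i * 2 ^ l.length + wSum d l := rfl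
    have hlen : (i :: l).length = l.length + 1 := rfl
    constructor
    · rw [hw]; nlinarith
    · rw [hw, hlen, pow_succ]; nlinarith

lemma digit_cancel {a a' E E' c : ℤ} (h : a * c + E = a' * c + E')
    (ha : 0 ≤ a) (ha1 : a ≤ 1) (ha' : 0 ≤ a') (ha1' : a' ≤ 1)
    (hE : 0 ≤ E) (hE1 : E ≤ c - 1) (hE' : 0 ≤ E') (hE1' : E' ≤ c - 1) :
    a = a' ∧ E = E' := by
  interval_cases a <;> interval_cases a' <;> omega

lemma dEF_bounds : ∀ i : Fin 4, (0 ≤ dE i ∧ dE i ≤ 1) ∧ (0 ≤ dF i ∧ dF i ≤ 1) := by decide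

lemma dEF_inj : ∀ i i' : Fin 4, dE i = dE i' → dF i = dF i' → i = i' := by decide

lemma wSum_inj : ∀ l l' : List (Fin 4), l.length = l'.length →
    wSum dE l = wSum dE l' → wSum dF l = wSum dF l' → l = l' := by
  intro l
  induction l with
  | nil =>
    intro l' hlen _ _
    cases l' with
    | nil => rfl
    | cons _ _ => simp at hlen
  | cons i l ih =>
    intro l' hlen hE hF
    cases l' with
    | nil => simp at hlen
    | cons i' l'' =>
      have hlen' : l.length = l''.length := by simpa using hlen
      have hEw : wSum dE (i :: l) = dE i * 2 ^ l.length + wSum dE l := rfl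
      have hEw' : wSum dE (i' :: l'') = dE i' * 2 ^ l.length + wSum dE l'' := by
        show dE i' * 2 ^ l''.length + wSum dE l'' = _
        rw [hlen']
      have hFw : wSum dF (i :: l) = dF i * 2 ^ l.length + wSum dF l := rfl
      have hFw' : wSum dF (i' :: l'') = dF i' * 2 ^ l.length + wSum dF l'' := by
        show dF i' * 2 ^ l''.length + wSum dF l'' = _
        rw [hlen']
      rw [hEw, hEw'] at hE
      rw [hFw, hFw'] at hF
      have hbE := wSum_bounds dE (fun i => (dEF_bounds i).1) l
      have hbE' := wSum_bounds dE (fun i => (dEF_bounds i).1) l''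
      have hbF := wSum_bounds dF (fun i => (dEF_bounds i).2) l
      have hbF' := wSum_bounds dF (fun i => (dEF_bounds i).2) l''
      rw [← hlen'] at hbE' hbF'
      obtain ⟨hE1, hE2⟩ := digit_cancel hE (dEF_bounds i).1.1 (dEF_bounds i).1.2
        (dEF_bounds i').1.1 (dEF_bounds i').1.2 hbE.1 hbE.2 hbE'.1 hbE'.2
      obtain ⟨hF1, hF2⟩ := digit_cancel hF (dEF_bounds i).2.1 (dEF_bounds i).2.2
        (dEF_bounds i').2.1 (dEF_bounds i').2.2 hbF.1 hbF.2 hbF'.1 hbF'.2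
      rw [dEF_inj i i' hE1 hF1, ih l'' hlen' hE2 hF2]


/-- If `2s·q_m ≤ 2^n − 1 < q_m` for some convergent denominator `q_m`, then (for `n` large)
the level-`n` images of any `z ∈ [0,1+t]` are `s/4^n`-separated. -/
theorem diophantine_separation (t : ℝ) (ht : Irrational t) (ht01 : t ∈ Set.Ioo (0:ℝ) 1)
    (s : ℝ) (hs : 0 < s) :
    ∃ N : ℕ, ∀ n ≥ N,
      (∃ m : ℕ, 2 * s * (cfDen t m : ℝ) ≤ 2 ^ n - 1 ∧ (2:ℝ) ^ n - 1 < (cfDen t m : ℝ)) →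
      ∀ z ∈ Set.Icc (0:ℝ) (1 + t), ∀ a a' : Fin n → Fin 4, a ≠ a' →
        s / 4 ^ n < |phiWord t (List.ofFn a) z - phiWord t (List.ofFn a') z| := by
  refine ⟨⌈s⌉₊ + 1, ?_⟩
  rintro n hn ⟨m, hm1, hm2⟩ z _ a a' hne
  have hn1 : 1 ≤ n := le_trans (by omega) hn
  have h2pos : (0:ℝ) < 2 ^ n := by positivity
  have hs2 : s < 2 ^ n := by
    have h1 : s ≤ (⌈s⌉₊ : ℝ) := Nat.le_ceil s
    have h2 : ⌈s⌉₊ < 2 ^ n := lt_of_lt_of_le (by omega) (Nat.le_of_lt (Nat.lt_two_pow_self (n := n)))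
    have h2' : ((⌈s⌉₊ : ℕ) : ℝ) < 2 ^ n := by exact_mod_cast h2
    linarith
  have hl : (List.ofFn a).length = n := List.length_ofFn (f := a)
  have hl' : (List.ofFn a').length = n := List.length_ofFn (f := a')
  have hll : List.ofFn a ≠ List.ofFn a' := fun h => hne (List.ofFn_injective h)
  set P : ℤ := wSum dE (List.ofFn a) - wSum dE (List.ofFn a') with hPdef
  set Q : ℤ := wSum dF (List.ofFn a) - wSum dF (List.ofFn a') with hQdef
  have hdiff : phiWord t (List.ofFn a) z - phiWord t (List.ofFn a') z
      = ((P:ℝ) + (Q:ℝ) * t) / 2 ^ n := by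
    rw [phiWord_eq, phiWord_eq, hl, hl', hPdef, hQdef]
    push_cast
    field_simp
    ring
  have hbEa := wSum_bounds dE (fun i => (dEF_bounds i).1) (List.ofFn a)
  have hbEa' := wSum_bounds dE (fun i => (dEF_bounds i).1) (List.ofFn a')
  have hbFa := wSum_bounds dF (fun i => (dEF_bounds i).2) (List.ofFn a)
  have hbFa' := wSum_bounds dF (fun i => (dEF_bounds i).2) (List.ofFn a')
  rw [hl] at hbEa hbFa
  rw [hl'] at hbEa' hbFa'
  have hPbound : |P| ≤ 2 ^ n - 1 := by rw [abs_le]; omega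
  have hQbound : |Q| ≤ 2 ^ n - 1 := by rw [abs_le]; omega
  have key : s / 2 ^ n < |(P:ℝ) + (Q:ℝ) * t| := by
    by_cases hQ : Q = 0
    · have hP : P ≠ 0 := by
        intro h0
        exact hll (wSum_inj _ _ (hl.trans hl'.symm) (by omega) (by omega))
      have h1 : (1:ℝ) ≤ |(P:ℝ)| := by
        rw [← Int.cast_abs]
        exact_mod_cast Int.one_le_abs hP
      have : s / 2 ^ n < 1 := by
        rw [div_lt_one h2pos]; exact hs2
      rw [hQ]
      push_cast
      rw [mul_comm, mul_zero, add_zero]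
      linarith
    · -- m must be at least 1
      obtain ⟨m', rfl⟩ : ∃ m', m = m' + 1 := by
        cases m with
        | zero =>
          exfalso
          have : (cfDen t 0 : ℝ) = 1 := by norm_num [cfDen]
          rw [this] at hm2
          have h2' : (2:ℝ) ≤ 2 ^ n := by
            calc (2:ℝ) = 2 ^ 1 := (pow_one 2).symm
            _ ≤ 2 ^ n := pow_le_pow_right₀ (by norm_num) hn1
          linarith
        | succ m' => exact ⟨m', rfl⟩
      have hqpos : (0:ℤ) < cfDen t (m' + 1) := (cfDen_prop t ht ht01 (m' + 1)).1
      have hqposR : (0:ℝ) < (cfDen t (m' + 1) : ℝ) := by exact_mod_cast hqpos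
      have hQcast : ((|Q|:ℤ):ℝ) < (cfDen t (m' + 1) : ℝ) := by
        have : ((|Q|:ℤ):ℝ) ≤ (2:ℝ) ^ n - 1 := by
          have := hQbound
          push_cast
          rw [← Int.cast_abs]
          exact_mod_cast this
        linarith
      have hQlt : |Q| < cfDen t (m' + 1) := by exact_mod_cast hQcast
      have hstep : s / 2 ^ n < 1 / (2 * (cfDen t (m' + 1) : ℝ)) := by
        rw [div_lt_div_iff₀ h2pos (by positivity)]
        nlinarith [hm1]
      rcases lt_or_gt_of_ne hQ with hQneg | hQpos
      · have hd := dio t ht ht01 m' P (-Q) (by omega) (by rw [abs_of_neg hQneg] at hQlt; omega)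
        have heq : ((-Q : ℤ):ℝ) * t - (P:ℝ) = -((P:ℝ) + (Q:ℝ) * t) := by push_cast; ring
        rw [heq, abs_neg] at hd
        linarith
      · have hd := dio t ht ht01 m' (-P) Q hQpos (by rw [abs_of_pos hQpos] at hQlt; omega)
        have heq : ((Q : ℤ):ℝ) * t - ((-P : ℤ):ℝ) = (P:ℝ) + (Q:ℝ) * t := by push_cast; ring
        rw [heq] at hd
        linarith
  rw [hdiff, abs_div, abs_of_pos h2pos]
  have h4 : (4:ℝ) ^ n = 2 ^ n * 2 ^ n := by
    rw [← mul_pow]; norm_num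
  rw [h4, ← div_div]
  gcongr
end

section
/- Let λ be the reciprocal of a Garsia number (a positive real algebraic integer with norm ±2 whose Galois conjugates all have modulus > 1). Then there exists s > 0 such that for all n and all distinct sequences (a_j), (a'_j) ∈ {−1,1}^n, |∑_{j=0}^{n−1} a_j λ^j − ∑_{j=0}^{n−1} a'_j λ^j| > s/2^n. -/
open Polynomial IntermediateField

lemma garsia_norm_multiset_prod (s : Multiset ℂ) : ‖s.prod‖ = (s.map norm).prod := by
  induction s using Multiset.induction_on with
  | empty => simp
  | cons a s ih => simp [ih]

lemma garsia_key (β : ℝ) (hint : IsIntegral ℤ β) (S : ℤ[X]) (hS : Polynomial.aeval β S ≠ 0) :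
    1 ≤ (((minpoly ℚ β).aroots ℂ).map (fun w => ‖Polynomial.aeval w S‖)).prod := by
  have hintQ : IsIntegral ℚ β := hint.tower_top
  haveI : FiniteDimensional ℚ ℚ⟮β⟯ := adjoin.finiteDimensional hintQ
  set b : ℚ⟮β⟯ := AdjoinSimple.gen ℚ β with hbdef
  have hbmap : algebraMap ℚ⟮β⟯ ℝ b = β := AdjoinSimple.algebraMap_gen ℚ β
  have hbint : IsIntegral ℤ b := by
    rwa [← isIntegral_algebraMap_iff (algebraMap ℚ⟮β⟯ ℝ).injective, hbmap]
  set x : ℚ⟮β⟯ := Polynomial.aeval b S with hxdef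
  have hxint : IsIntegral ℤ x :=
    IsIntegral.of_mem_of_fg _ hbint.fg_adjoin_singleton _ (Polynomial.aeval_mem_adjoin_singleton ℤ b)
  have hx0 : x ≠ 0 := by
    intro h
    apply hS
    have h2 := Polynomial.aeval_algebraMap_apply ℝ b S
    rw [hbmap] at h2
    rw [h2, show Polynomial.aeval b S = (0 : ℚ⟮β⟯) from h, map_zero]
  have hnormint : IsIntegral ℤ (Algebra.norm ℚ x) := Algebra.isIntegral_norm ℚ hxint
  obtain ⟨z, hz⟩ := IsIntegrallyClosed.isIntegral_iff.mp hnormint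
  have hz0 : z ≠ 0 := by
    rintro rfl
    simp only [map_zero] at hz
    exact (Algebra.norm_ne_zero_iff.mpr hx0) hz.symm
  have hemb : algebraMap ℚ ℂ (Algebra.norm ℚ x) = ∏ σ : ℚ⟮β⟯ →ₐ[ℚ] ℂ, σ x :=
    Algebra.norm_eq_prod_embeddings ℚ ℂ x
  have hσ : ∀ σ : ℚ⟮β⟯ →ₐ[ℚ] ℂ, σ x = Polynomial.aeval (σ b) S := by
    intro σ
    exact (Polynomial.aeval_algHom_apply (σ.restrictScalars ℤ) b S).symm
  have hsep : ((minpoly ℚ β).aroots ℂ).Nodup :=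
    (Polynomial.nodup_roots ((minpoly.irreducible hintQ).separable.map))
  set W : Multiset ℂ := (minpoly ℚ β).aroots ℂ with hWdef
  have hprod : (∏ σ : ℚ⟮β⟯ →ₐ[ℚ] ℂ, Polynomial.aeval (σ b) S)
      = ∏ w : {w // w ∈ W}, Polynomial.aeval (w : ℂ) S := by
    refine (Fintype.prod_equiv (algHomAdjoinIntegralEquiv ℚ (K := ℂ) hintQ).symm
      (fun w => Polynomial.aeval (w : ℂ) S)
      (fun σ => Polynomial.aeval (σ b) S) ?_).symm
    intro w
    simp only [hbdef, algHomAdjoinIntegralEquiv_symm_apply_gen]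
  have hfin : (∏ w : {w // w ∈ W}, Polynomial.aeval (w : ℂ) S)
      = (W.map (fun w => Polynomial.aeval w S)).prod := by
    rw [← Finset.prod_subtype W.toFinset (fun w => Multiset.mem_toFinset)
      (fun w => Polynomial.aeval w S)]
    rw [Finset.prod_eq_multiset_prod]
    rw [Multiset.toFinset_val, Multiset.dedup_eq_self.mpr hsep]
  have habs : ‖algebraMap ℚ ℂ (Algebra.norm ℚ x)‖
      = (W.map (fun w => ‖Polynomial.aeval w S‖)).prod := by
    rw [hemb, Finset.prod_congr rfl (fun σ _ => hσ σ), hprod, hfin]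
    rw [garsia_norm_multiset_prod, Multiset.map_map]
    rfl
  rw [← habs, ← hz]
  have h1 : (1:ℝ) ≤ |(z:ℚ)| := by exact_mod_cast Int.one_le_abs (by exact_mod_cast hz0)
  calc (1:ℝ) ≤ |(z:ℚ)| := h1
    _ = ‖algebraMap ℚ ℂ (algebraMap ℤ ℚ z)‖ := by
        rw [show algebraMap ℚ ℂ (algebraMap ℤ ℚ z) = ((z:ℤ):ℂ) by norm_cast]
        rw [Complex.norm_intCast]
        push_cast
        ring

set_option maxHeartbeats 1600000 in
/-- Garsia's separation lemma: if `λ = 1/β` where `β` is a Garsia number (a positive real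
algebraic integer whose minimal polynomial has constant term of absolute value 2 and all of
whose complex conjugates have modulus `> 1`), then distinct `±1` polynomials in `λ` of degree
`< n` differ by more than `s/2^n`. -/
theorem garsia_separation (β : ℝ) (hβpos : 0 < β) (hint : IsIntegral ℤ β)
    (hnorm : |(minpoly ℤ β).coeff 0| = 2)
    (hconj : ∀ w : ℂ, Polynomial.aeval w (minpoly ℤ β) = 0 → 1 < ‖w‖) :
    ∃ s > (0:ℝ), ∀ n : ℕ, ∀ a a' : Fin n → ℝ,
      (∀ j, a j = 1 ∨ a j = -1) → (∀ j, a' j = 1 ∨ a' j = -1) → a ≠ a' →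
      s / 2 ^ n <
        |∑ j : Fin n, a j * (1 / β) ^ (j : ℕ) - ∑ j : Fin n, a' j * (1 / β) ^ (j : ℕ)| := by
  classical
  set p : ℤ[X] := minpoly ℤ β with hp
  have hpQ : minpoly ℚ β = p.map (algebraMap ℤ ℚ) :=
    minpoly.isIntegrallyClosed_eq_field_fractions' ℚ hint
  set W : Multiset ℂ := (minpoly ℚ β).aroots ℂ with hW
  have hWp : W = (p.map (algebraMap ℤ ℂ)).roots := by
    rw [hW, hpQ, aroots_def, Polynomial.map_map]
    norm_num [IsScalarTower.algebraMap_eq ℤ ℚ ℂ]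
  have hpm0 : p.map (algebraMap ℤ ℂ) ≠ 0 := Polynomial.map_monic_ne_zero (minpoly.monic hint)
  have hmem : ∀ w : ℂ, w ∈ W ↔ Polynomial.aeval w p = 0 := by
    intro w
    rw [hWp, Polynomial.mem_roots hpm0]
    simp [Polynomial.IsRoot.def, Polynomial.eval_map, Polynomial.aeval_def]
  have hgt : ∀ w ∈ W, 1 < ‖w‖ := fun w hw => hconj w ((hmem w).mp hw)
  have hβmem : (β : ℂ) ∈ W := by
    rw [hmem]
    have h0 : Polynomial.aeval β p = 0 := minpoly.aeval ℤ β
    have h2 := Polynomial.aeval_algebraMap_apply ℂ β p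
    rw [h0, map_zero] at h2
    simpa using h2
  have hprod2 : (W.map norm).prod = 2 := by
    have hmo : (p.map (algebraMap ℤ ℂ)).Monic := (minpoly.monic hint).map _
    have hcz := (IsAlgClosed.splits (p.map (algebraMap ℤ ℂ))).coeff_zero_eq_prod_roots_of_monic hmo
    have habs := congrArg norm hcz
    rw [norm_mul, norm_pow, Polynomial.coeff_map] at habs
    simp only [norm_neg, norm_one, one_pow, one_mul] at habs
    rw [garsia_norm_multiset_prod, ← hWp] at habs
    have : ‖(algebraMap ℤ ℂ) (p.coeff 0)‖ = 2 := by
      rw [show (algebraMap ℤ ℂ) (p.coeff 0) = ((p.coeff 0 : ℤ) : ℂ) from rfl,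
        Complex.norm_intCast]
      exact_mod_cast hnorm
    rw [this] at habs
    exact habs.symm
  have hβgt : 1 < β := by
    have := hgt _ hβmem
    rwa [Complex.norm_real, Real.norm_eq_abs, abs_of_pos hβpos] at this
  set W' : Multiset ℂ := W.erase (β:ℂ) with hW'
  have hcons : (β:ℂ) ::ₘ W' = W := Multiset.cons_erase hβmem
  have hgt' : ∀ w ∈ W', 1 < ‖w‖ := fun w hw => hgt w (Multiset.mem_of_mem_erase hw)
  set C : ℝ := (W'.map (fun w => ‖w‖ / (‖w‖ - 1))).prod with hCdef
  have hC1 : (1:ℝ) ≤ C := by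
    refine Multiset.one_le_prod ?_
    intro x hx
    rcases Multiset.mem_map.mp hx with ⟨w, hw, rfl⟩
    have hw1 := hgt' w hw
    rw [le_div_iff₀ (by linarith)]
    linarith
  have hC0 : (0:ℝ) < C := lt_of_lt_of_le one_pos hC1
  have hW'2 : (W'.map norm).prod = 2/β := by
    rw [← hcons, Multiset.map_cons, Multiset.prod_cons, Complex.norm_real, Real.norm_eq_abs,
      abs_of_pos hβpos] at hprod2
    field_simp
    linarith [hprod2]
  refine ⟨2 / C, by positivity, ?_⟩
  intro n a a' ha ha' hne
  have hn0 : 0 < n := by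
    rcases Nat.eq_zero_or_pos n with h|h
    · subst h
      exact absurd (_root_.funext fun j : Fin 0 => j.elim0) hne
    · exact h
  set c : ℕ → ℤ := fun j =>
    if h : j < n then (if a ⟨j,h⟩ = a' ⟨j,h⟩ then 0 else if a ⟨j,h⟩ = 1 then 1 else -1) else 0
    with hc
  have hcvals : ∀ j, c j = 0 ∨ c j = 1 ∨ c j = -1 := by
    intro j
    simp only [hc]
    split_ifs <;> simp
  have hdiff : ∀ (j : ℕ) (h : j < n), a ⟨j,h⟩ - a' ⟨j,h⟩ = 2 * (c j : ℝ) := by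
    intro j h
    simp only [hc, dif_pos h]
    rcases ha ⟨j,h⟩ with h1|h1 <;> rcases ha' ⟨j,h⟩ with h2|h2 <;>
      rw [h1, h2] <;> split_ifs <;> push_cast <;> norm_num at *
  have hex : ∃ j, j ≤ n - 1 ∧ c j ≠ 0 := by
    obtain ⟨j, hj⟩ := Function.ne_iff.mp hne
    refine ⟨(j:ℕ), by omega, ?_⟩
    intro h0
    apply hj
    have hd := hdiff (j:ℕ) j.isLt
    rw [h0] at hd
    push_cast at hd
    have : a ⟨(j:ℕ), j.isLt⟩ = a' ⟨(j:ℕ), j.isLt⟩ := by linarith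
    simpa [Fin.eta] using this
  obtain ⟨j0, hj0le, hj0⟩ := hex
  set m := Nat.findGreatest (fun j => c j ≠ 0) (n-1) with hm
  have hcm : c m ≠ 0 := Nat.findGreatest_spec (P := fun j => c j ≠ 0) hj0le hj0
  have hmle : m ≤ n - 1 := Nat.findGreatest_le _
  have hzero : ∀ j, m < j → c j = 0 := by
    intro j hj
    by_cases hjn : j ≤ n - 1
    · by_contra hcj
      have hle := Nat.le_findGreatest (P := fun j => c j ≠ 0) hjn hcj
      rw [← hm] at hle
      omega
    · simp only [hc]
      rw [dif_neg]
      omega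
  set S : ℤ[X] := ∑ j ∈ Finset.range (m+1), Polynomial.C (c j) * Polynomial.X ^ (m - j)
    with hSdef
  have hcoeff0 : S.coeff 0 = c m := by
    rw [hSdef, Polynomial.finset_sum_coeff]
    rw [Finset.sum_eq_single m]
    · simp
    · intro j hj hjm
      rw [Polynomial.coeff_C_mul, Polynomial.coeff_X_pow]
      have : ¬ (0 = m - j) := by
        rw [Finset.mem_range] at hj
        omega
      simp [this]
    · intro h
      exact absurd (Finset.self_mem_range_succ m) h
  have hSne : Polynomial.aeval β S ≠ 0 := by
    intro h0
    obtain ⟨T, hT⟩ := minpoly.isIntegrallyClosed_dvd hint h0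
    have hdvd : p.coeff 0 ∣ c m := by
      rw [← hcoeff0, hT, Polynomial.mul_coeff_zero]
      exact Dvd.intro _ rfl
    have h2 : (2:ℤ) ∣ c m := by rw [← hnorm, abs_dvd]; exact hdvd
    rcases hcvals m with h|h|h
    · exact hcm h
    · rw [h] at h2; norm_num at h2
    · rw [h] at h2; norm_num at h2
  have hβne : (β:ℝ) ≠ 0 := ne_of_gt hβpos
  set T : ℝ := ∑ j ∈ Finset.range (m+1), (c j : ℝ) * (1/β)^j with hTdef
  have hevalS : Polynomial.aeval β S = β^m * T := by
    rw [hSdef, hTdef, map_sum, Finset.mul_sum]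
    refine Finset.sum_congr rfl ?_
    intro j hj
    rw [Finset.mem_range] at hj
    rw [map_mul, map_pow, Polynomial.aeval_C, Polynomial.aeval_X]
    rw [show (algebraMap ℤ ℝ) (c j) = ((c j : ℤ) : ℝ) from rfl]
    rw [show β^m * ((c j:ℝ) * (1/β)^j) = (c j:ℝ) * (β^m / β^j) by
      rw [one_div, inv_pow, div_eq_mul_inv]; ring]
    rw [pow_sub₀ β hβne (by omega), div_eq_mul_inv]
  have hsum : ∑ j : Fin n, a j * (1/β)^(j:ℕ) - ∑ j : Fin n, a' j * (1/β)^(j:ℕ) = 2 * T := by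
    rw [← Finset.sum_sub_distrib]
    have h1 : ∀ j : Fin n, a j * (1/β)^(j:ℕ) - a' j * (1/β)^(j:ℕ)
        = 2 * ((c (j:ℕ) : ℝ) * (1/β)^(j:ℕ)) := by
      intro j
      have hd := hdiff (j:ℕ) j.isLt
      simp only [Fin.eta] at hd
      rw [← sub_mul, hd]
      ring
    rw [Finset.sum_congr rfl (fun j _ => h1 j), ← Finset.mul_sum]
    congr 1
    rw [Fin.sum_univ_eq_sum_range (fun j => (c j : ℝ) * (1/β)^j) n, hTdef]
    symm
    apply Finset.sum_subset
    · intro x hx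
      rw [Finset.mem_range] at *
      omega
    · intro x hx hnx
      rw [Finset.mem_range] at hx hnx
      rw [hzero x (by omega)]
      simp
  have hbound : ∀ w ∈ W', ‖Polynomial.aeval w S‖
      ≤ ‖w‖ ^ m * (‖w‖ / (‖w‖ - 1)) := by
    intro w hw
    have haw : 1 < ‖w‖ := hgt' w hw
    have haw0 : (0:ℝ) < ‖w‖ - 1 := by linarith
    have h1 : ‖Polynomial.aeval w S‖
        ≤ ∑ j ∈ Finset.range (m+1), ‖w‖ ^ (m-j) := by
      rw [hSdef, map_sum]
      refine le_trans (norm_sum_le _ _) (Finset.sum_le_sum ?_)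
      intro j hj
      rw [map_mul, map_pow, Polynomial.aeval_C, Polynomial.aeval_X, norm_mul, norm_pow]
      have hcj : ‖(algebraMap ℤ ℂ) (c j)‖ ≤ 1 := by
        rw [show (algebraMap ℤ ℂ) (c j) = ((c j : ℤ) : ℂ) from rfl, Complex.norm_intCast]
        rcases hcvals j with h|h|h <;> rw [h] <;> norm_num
      calc ‖(algebraMap ℤ ℂ) (c j)‖ * ‖w‖ ^ (m-j)
          ≤ 1 * ‖w‖ ^ (m-j) := by
            apply mul_le_mul_of_nonneg_right hcj (by positivity)
        _ = ‖w‖ ^ (m-j) := one_mul _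
    have h2 : ∑ j ∈ Finset.range (m+1), ‖w‖ ^ (m-j)
        = ∑ j ∈ Finset.range (m+1), ‖w‖ ^ j := by
      rw [← Finset.sum_range_reflect (fun j => ‖w‖ ^ j) (m+1)]
      refine Finset.sum_congr rfl ?_
      intro j hj
      rw [Finset.mem_range] at hj
      congr 1
    have h3 : ∑ j ∈ Finset.range (m+1), ‖w‖ ^ j
        = (‖w‖ ^ (m+1) - 1)/(‖w‖ - 1) := geom_sum_eq (by linarith) (m+1)
    have h4 : (‖w‖ ^ (m+1) - 1)/(‖w‖ - 1)
        ≤ ‖w‖ ^ m * (‖w‖ / (‖w‖ - 1)) := by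
      rw [show ‖w‖ ^ m * (‖w‖ / (‖w‖ - 1))
          = ‖w‖ ^ (m+1) / (‖w‖ - 1) by rw [pow_succ]; ring]
      gcongr
      · linarith
    linarith
  have hProd1 := garsia_key β hint S hSne
  rw [← hW] at hProd1
  have hsplit : (W.map (fun w => ‖Polynomial.aeval w S‖)).prod
      = ‖Polynomial.aeval ((β:ℝ):ℂ) S‖
        * (W'.map (fun w => ‖Polynomial.aeval w S‖)).prod := by
    rw [← hcons, Multiset.map_cons, Multiset.prod_cons]
  have habsβ : ‖Polynomial.aeval ((β:ℝ):ℂ) S‖ = |Polynomial.aeval β S| := by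
    rw [show ((β:ℝ):ℂ) = algebraMap ℝ ℂ β from rfl, Polynomial.aeval_algebraMap_apply]
    exact (Complex.norm_real _).trans (Real.norm_eq_abs _)
  have hprodW' : (W'.map (fun w => ‖Polynomial.aeval w S‖)).prod ≤ (2/β)^m * C := by
    refine le_trans (Multiset.prod_map_le_prod_map₀ _ _
      (fun w _ => norm_nonneg _) hbound) ?_
    rw [Multiset.prod_map_mul, Multiset.prod_map_pow, hW'2]
  have hA0 : 0 < |Polynomial.aeval β S| := abs_pos.mpr hSne
  have hkey : (1:ℝ) ≤ |Polynomial.aeval β S| * ((2/β)^m * C) := by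
    calc (1:ℝ) ≤ _ := hProd1
      _ = |Polynomial.aeval β S|
          * (W'.map (fun w => ‖Polynomial.aeval w S‖)).prod := by
            rw [hsplit, habsβ]
      _ ≤ _ := mul_le_mul_of_nonneg_left hprodW' hA0.le
  have hTne : T ≠ 0 := fun h => hSne (by rw [hevalS, h, mul_zero])
  have hT0 : 0 < |T| := abs_pos.mpr hTne
  have hAT : |Polynomial.aeval β S| = β^m * |T| := by
    rw [hevalS, abs_mul, abs_of_pos (pow_pos hβpos m)]
  have hkey2 : (1:ℝ) ≤ |T| * 2^m * C := by
    have hrw : β^m * |T| * ((2/β)^m * C) = |T| * 2^m * C := by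
      rw [div_pow]
      field_simp
    rw [hAT, hrw] at hkey
    exact hkey
  rw [hsum, abs_mul, abs_two]
  have h2n : (2:ℝ)^(m+1) ≤ 2^n := by
    apply pow_le_pow_right₀ (by norm_num)
    omega
  rw [div_div, div_lt_iff₀ (by positivity)]
  have e1 : |T| * C * 2^(m+1) ≤ |T| * C * 2^n :=
    mul_le_mul_of_nonneg_left h2n (by positivity)
  have e2 : |T| * C * 2^(m+1) = 2 * (|T| * 2^m * C) := by rw [pow_succ]; ring
  have e3 : (2:ℝ) ≤ |T| * C * 2^n := by
    rw [e2] at e1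
    nlinarith [hkey2]
  nlinarith [e3, hT0, hC0]
end

section
/- Let (x_j) be a sequence in ℝ^d and (r_j), (r'_j) positive sequences converging to 0 with r_j ≍ r'_j (i.e. C^{−1} r'_j ≤ r_j ≤ C r'_j for some C > 0). Then the sets {x : x ∈ B(x_j, r_j) for infinitely many j} and {x : x ∈ B(x_j, r'_j) for infinitely many j} have equal Lebesgue measure. -/
/-! Lebesgue measure is uniformly locally doubling, so by the Lebesgue density theorem (in the
form of Cassels' lemma `blimsup_cthickening_ae_le_of_eventually_mul_le`) shrinking all radii of a
limsup set of balls by a fixed factor changes it only by a null set. Applying this with the factor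
`C⁻¹` in both directions gives the two a.e. inclusions. -/

open MeasureTheory Filter Metric Set

theorem setOf_infinite_mem_closedBall_eq_limsup {α : Type*} [PseudoMetricSpace α] (x : ℕ → α)
    (r : ℕ → ℝ) :
    {y | {j | y ∈ closedBall (x j) (r j)}.Infinite} =
      (limsup (fun j => closedBall (x j) (r j)) atTop : Set α) := by
  ext y
  simp only [mem_limsup_iff_frequently_mem, mem_ofPred_eq, Nat.frequently_atTop_iff_infinite]

section DoublingMeasure

variable {α : Type*} [PseudoMetricSpace α] [SecondCountableTopology α] [MeasurableSpace α]
  [BorelSpace α] (μ : Measure α) [IsLocallyFiniteMeasure μ] [IsUnifLocDoublingMeasure μ]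

theorem limsup_closedBall_ae_le_of_eventually_mul_le (x : ℕ → α) {r r' : ℕ → ℝ} {M : ℝ}
    (hM : 0 < M) (hr : ∀ j, 0 < r j) (hr0 : Tendsto r atTop (nhds 0))
    (hMr : ∀ j, M * r j ≤ r' j) :
    (limsup (fun j => closedBall (x j) (r j)) atTop : Set α) ≤ᵐ[μ]
      (limsup (fun j => closedBall (x j) (r' j)) atTop : Set α) := by
  have hr' (j : ℕ) : 0 < r' j := (mul_pos hM (hr j)).trans_le (hMr j)
  have hr0' : Tendsto r atTop (nhdsWithin 0 (Ioi 0)) :=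
    tendsto_nhdsWithin_iff.mpr ⟨hr0, .of_forall hr⟩
  simpa only [blimsup_true, cthickening_singleton _ (hr _).le, cthickening_singleton _ (hr' _).le]
    using blimsup_cthickening_ae_le_of_eventually_mul_le μ (fun _ => True) (s := fun j => {x j})
      hM hr0' (.of_forall hMr)

end DoublingMeasure

/-- Comparable radii give limsup sets of balls of equal Lebesgue measure. -/
theorem limsup_balls_comparable_radii {d : ℕ} (x : ℕ → EuclideanSpace ℝ (Fin d))
    (r r' : ℕ → ℝ) (hr : ∀ j, 0 < r j) (hr' : ∀ j, 0 < r' j)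
    (hr0 : Filter.Tendsto r Filter.atTop (nhds 0))
    (hr'0 : Filter.Tendsto r' Filter.atTop (nhds 0))
    (hcomp : ∃ C > (0:ℝ), ∀ j, C⁻¹ * r' j ≤ r j ∧ r j ≤ C * r' j) :
    volume {y | {j | y ∈ Metric.closedBall (x j) (r j)}.Infinite} =
      volume {y | {j | y ∈ Metric.closedBall (x j) (r' j)}.Infinite} := by
  obtain ⟨C, hC, hCr⟩ := hcomp
  rw [setOf_infinite_mem_closedBall_eq_limsup, setOf_infinite_mem_closedBall_eq_limsup]
  refine measure_congr (eventuallyLE_antisymm_iff.mpr ⟨?_, ?_⟩)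
  · refine limsup_closedBall_ae_le_of_eventually_mul_le volume x (inv_pos.mpr hC) hr hr0
      fun j => ?_
    rw [inv_mul_le_iff₀ hC]
    exact (hCr j).2
  · exact limsup_closedBall_ae_le_of_eventually_mul_le volume x (inv_pos.mpr hC) hr' hr'0
      fun j => (hCr j).1
end

section
/- Let B(x_j, r_j) be a sequence of balls in ℝ^d with r_j → 0. Then the Lebesgue measure of {x : x ∈ B(x_j, r_j) for infinitely many j} equals the Lebesgue measure of ⋂_{0<c<1} {x : x ∈ B(x_j, c·r_j) for infinitely many j}. -/
/-! For `c > 0` the limsup sets of the balls `B(x j, c * r j)` and `B(x j, r j)` agree up to a null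
set: this is the density argument of Beresnevich–Velani, available in Mathlib for any uniformly
locally doubling measure. Since the limsup set grows with `c`, the intersection over `c ∈ (0, 1)`
is squeezed between `c = 1/2` and the countable intersection over `c = 1/(n + 1)`. -/

open MeasureTheory Metric Filter Set

def limsupClosedBalls {α : Type*} [PseudoMetricSpace α] (x : ℕ → α) (r : ℕ → ℝ) : Set α :=
  {y | {j | y ∈ closedBall (x j) (r j)}.Infinite}

section

variable {α : Type*} [PseudoMetricSpace α]

theorem limsupClosedBalls_mono {x : ℕ → α} {r s : ℕ → ℝ} (h : ∀ j, 0 ≤ r j → r j ≤ s j) :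
    limsupClosedBalls x r ⊆ limsupClosedBalls x s := fun _ hy =>
  hy.mono fun j hj => closedBall_subset_closedBall (h j (dist_nonneg.trans hj)) hj

theorem limsupClosedBalls_mul_mono {x : ℕ → α} {r : ℕ → ℝ} {a b : ℝ} (ha : 0 < a) (hab : a ≤ b) :
    limsupClosedBalls x (fun j => a * r j) ⊆ limsupClosedBalls x (fun j => b * r j) :=
  limsupClosedBalls_mono fun _ hj =>
    mul_le_mul_of_nonneg_right hab (nonneg_of_mul_nonneg_right hj ha)

/-- The predicate `0 ≤ r j` is needed because `cthickening δ {x}` is `{x}`, not `∅`, for `δ < 0`. -/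
theorem limsupClosedBalls_mul_eq_blimsup (x : ℕ → α) (r : ℕ → ℝ) {c : ℝ} (hc : 0 < c) :
    limsupClosedBalls x (fun j => c * r j) =
      blimsup (fun j => cthickening (c * r j) {x j}) atTop (fun j => 0 ≤ r j) := by
  rw [← Nat.cofinite_eq_atTop, cofinite.blimsup_set_eq]
  ext y
  suffices hiff : ∀ j, y ∈ closedBall (x j) (c * r j) ↔ 0 ≤ r j ∧ y ∈ cthickening (c * r j) {x j} by
    simp only [limsupClosedBalls, mem_ofPred_eq, hiff]
  intro j
  constructor
  · intro hj
    have hrj : 0 ≤ r j := nonneg_of_mul_nonneg_right (dist_nonneg.trans hj) hc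
    rw [cthickening_singleton _ (mul_nonneg hc.le hrj)]
    exact ⟨hrj, hj⟩
  · rintro ⟨hrj, hj⟩
    rwa [cthickening_singleton _ (mul_nonneg hc.le hrj)] at hj

variable [SecondCountableTopology α] [MeasurableSpace α] [BorelSpace α]
  (μ : Measure α) [IsLocallyFiniteMeasure μ] [IsUnifLocDoublingMeasure μ]

theorem limsupClosedBalls_mul_ae_eq (x : ℕ → α) {r : ℕ → ℝ} (hr : Tendsto r atTop (nhds 0))
    {c : ℝ} (hc : 0 < c) :
    limsupClosedBalls x (fun j => c * r j) =ᵐ[μ] limsupClosedBalls x r := by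
  have hr' : limsupClosedBalls x r = limsupClosedBalls x (fun j => 1 * r j) := by
    simp only [one_mul]
  rw [hr', limsupClosedBalls_mul_eq_blimsup x r hc, limsupClosedBalls_mul_eq_blimsup x r one_pos]
  simpa only [one_mul] using blimsup_cthickening_mul_ae_eq μ _ (fun j => {x j}) hc r hr

theorem measure_biInter_Ioo_limsupClosedBalls_mul (x : ℕ → α) {r : ℕ → ℝ}
    (hr : Tendsto r atTop (nhds 0)) :
    μ (⋂ c ∈ Ioo (0 : ℝ) 1, limsupClosedBalls x (fun j => c * r j)) =
      μ (limsupClosedBalls x r) := by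
  refine le_antisymm ?_ ?_
  · calc μ (⋂ c ∈ Ioo (0 : ℝ) 1, limsupClosedBalls x (fun j => c * r j))
        ≤ μ (limsupClosedBalls x (fun j => 2⁻¹ * r j)) :=
          measure_mono (biInter_subset_of_mem ⟨by norm_num, by norm_num⟩)
      _ = μ (limsupClosedBalls x r) :=
          measure_congr (limsupClosedBalls_mul_ae_eq μ x hr (by norm_num))
  · have hseq : (⋂ n : ℕ, limsupClosedBalls x (fun j => (1 / (n + 1 : ℝ)) * r j)) =ᵐ[μ]
        limsupClosedBalls x r := by
      simpa only [iInter_const] using Filter.EventuallyEq.countable_iInter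
        fun n : ℕ => limsupClosedBalls_mul_ae_eq μ x hr (c := 1 / (n + 1 : ℝ)) (by positivity)
    rw [← measure_congr hseq]
    refine measure_mono (subset_iInter₂ fun c hc => ?_)
    obtain ⟨n, hn⟩ := exists_nat_one_div_lt hc.1
    exact (iInter_subset _ n).trans (limsupClosedBalls_mul_mono (by positivity) hn.le)

end

/-- Shrinking the radii by any factor `c ∈ (0,1)` does not change the Lebesgue measure of the
limsup set of a sequence of balls with radii tending to `0`. -/
theorem limsup_balls_shrink {d : ℕ} (x : ℕ → EuclideanSpace ℝ (Fin d)) (r : ℕ → ℝ)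
    (hr0 : Filter.Tendsto r Filter.atTop (nhds 0)) :
    volume {y | {j | y ∈ Metric.closedBall (x j) (r j)}.Infinite} =
      volume (⋂ (c : ℝ) (_ : c ∈ Set.Ioo (0:ℝ) 1),
        {y | {j | y ∈ Metric.closedBall (x j) (c * r j)}.Infinite}) :=
  (measure_biInter_Ioo_limsupClosedBalls_mul volume x hr0).symm
end
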